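/- arXiv:1802.03742 — 2 statements merged into one kernel-verified Lean document; each statement's English description precedes it below -/
import Mathlib

section
/- Let u : A → B(H) be a unital completely positive map from a unital C*-algebra A, with Stinespring dilation π : A → B(Ĥ) where H ⊆ Ĥ and u(a) = P_H π(a)|_H. If x ∈ A is unitary and u(x) is unitary, then π(x) commutes with the orthogonal projection P_H onto H. -/
/-!
If `T` is a contraction on `U` whose compression `P_U T|_U` is isometric, then for `v ∈ U`
Pythagoras gives `‖T v‖² = ‖P_U T v‖² + ‖P_{Uᗮ} T v‖²` with `‖P_U T v‖ = ‖v‖ ≥ ‖T v‖`, so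
`T v ∈ U`. Thus a unitary `π x` with unitary compression `u x` leaves `H` invariant, and so
does its adjoint, whose compression is `(u x)*`. Invariance of `H` under `π x` and `(π x)*`
means invariance of `H` and `Hᗮ` under `π x`, i.e. `π x` commutes with `P_H`.
-/

open ContinuousLinearMap Module.End

namespace Submodule

variable {𝕜 E : Type*} [RCLike 𝕜] [NormedAddCommGroup E] [InnerProductSpace 𝕜 E]

theorem mem_invtSubmodule_of_norm_compression_eq {T : E →L[𝕜] E} {U : Submodule 𝕜 E}
    [U.HasOrthogonalProjection] (hT : ∀ v ∈ U, ‖T v‖ ≤ ‖v‖)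
    (hc : ∀ v : U, ‖(U.orthogonalProjectionOnto ∘L T ∘L U.subtypeL) v‖ = ‖v‖) :
    U ∈ invtSubmodule T := by
  refine (mem_invtSubmodule_iff_forall_mem_of_mem _).mpr fun v hv ↦ ?_
  rw [U.mem_iff_norm_starProjection]
  refine le_antisymm (U.norm_starProjection_apply_le _) ?_
  calc ‖T v‖ ≤ ‖v‖ := hT v hv
    _ = ‖U.starProjection (T v)‖ := (hc ⟨v, hv⟩).symm

variable [CompleteSpace E]

theorem commute_starProjection_of_mem_invtSubmodule {T : E →L[𝕜] E} {U : Submodule 𝕜 E}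
    [U.HasOrthogonalProjection] (hT : U ∈ invtSubmodule T)
    (hT' : U ∈ invtSubmodule (adjoint T)) :
    Commute T U.starProjection := by
  refine ((isIdempotentElem_starProjection U).commute_iff.mpr ?_).symm
  rw [range_starProjection, ker_starProjection]
  exact ⟨hT, ContinuousLinearMap.mem_invtSubmodule_adjoint_iff.mp hT'⟩

theorem adjoint_compression (T : E →L[𝕜] E) (U : Submodule 𝕜 E) [CompleteSpace U] :
    adjoint (U.orthogonalProjectionOnto ∘L T ∘L U.subtypeL)
      = U.orthogonalProjectionOnto ∘L adjoint T ∘L U.subtypeL := by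
  rw [adjoint_comp, adjoint_comp, adjoint_subtypeL, adjoint_orthogonalProjectionOnto, comp_assoc]

theorem mem_invtSubmodule_of_unitary_compression {T : E →L[𝕜] E} {U : Submodule 𝕜 E}
    [CompleteSpace U] (hT : T ∈ unitary (E →L[𝕜] E))
    (hc : U.orthogonalProjectionOnto ∘L T ∘L U.subtypeL ∈ unitary (U →L[𝕜] U)) :
    U ∈ invtSubmodule T :=
  mem_invtSubmodule_of_norm_compression_eq (fun v _ ↦ (T.norm_map_of_mem_unitary hT v).le)
    (norm_map_of_mem_unitary hc)

theorem commute_starProjection_of_unitary_compression {T : E →L[𝕜] E} {U : Submodule 𝕜 E}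
    [CompleteSpace U] (hT : T ∈ unitary (E →L[𝕜] E))
    (hc : U.orthogonalProjectionOnto ∘L T ∘L U.subtypeL ∈ unitary (U →L[𝕜] U)) :
    Commute T U.starProjection := by
  have hT' : adjoint T ∈ unitary (E →L[𝕜] E) := Unitary.star_mem hT
  have hc' : U.orthogonalProjectionOnto ∘L adjoint T ∘L U.subtypeL ∈ unitary (U →L[𝕜] U) := by
    rw [← adjoint_compression]
    exact Unitary.star_mem hc
  exact commute_starProjection_of_mem_invtSubmodule
    (mem_invtSubmodule_of_unitary_compression hT hc)
    (mem_invtSubmodule_of_unitary_compression hT' hc')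

end Submodule

theorem stinespring_unitary_commutes_proj_general
    {A E : Type*} [CStarAlgebra A]
    [NormedAddCommGroup E] [InnerProductSpace ℂ E] [CompleteSpace E]
    (K : Submodule ℂ E) [CompleteSpace K]
    (π : A →⋆ₐ[ℂ] (E →L[ℂ] E))
    (u : A → (K →L[ℂ] K))
    (hu : ∀ a : A, u a = (Submodule.orthogonalProjection K).comp ((π a).comp K.subtypeL))
    (x : A) (hx : x ∈ unitary A) (hux : u x ∈ unitary (K →L[ℂ] K)) :
    Commute (π x) (K.subtypeL.comp (Submodule.orthogonalProjection K)) := by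
  rw [hu] at hux
  exact K.commute_starProjection_of_unitary_compression (Unitary.map_mem π hx) hux

/-- Let `u : A → B(H)` be a unital completely positive map on a unital C*-algebra `A`,
given by a Stinespring dilation: a unital *-homomorphism `π : A → B(Ĥ)` with `H ⊆ Ĥ` and
`u a = P_H π(a)|_H`. If `x ∈ A` is unitary and `u x` is unitary, then `π x` commutes with
the orthogonal projection `P_H` onto `H`. -/
theorem stinespring_unitary_commutes_proj
    {A E : Type*} [CStarAlgebra A] [StarModule ℂ A]
    [NormedAddCommGroup E] [InnerProductSpace ℂ E] [CompleteSpace E]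
    (K : Submodule ℂ E) [CompleteSpace K]
    (π : A →⋆ₐ[ℂ] (E →L[ℂ] E))
    (u : A → (K →L[ℂ] K))
    (hu : ∀ a : A, u a = (Submodule.orthogonalProjection K).comp ((π a).comp K.subtypeL))
    (x : A) (hx : x ∈ unitary A) (hux : u x ∈ unitary (K →L[ℂ] K)) :
    Commute (π x) (K.subtypeL.comp (Submodule.orthogonalProjection K)) :=
  stinespring_unitary_commutes_proj_general K π u hu x hx hux
end

section
/- Let S be a subset of contractions in ⋃ₙ Mₙ(𝒜) containing e₁₁ ⊗ 1, and let F be the set of x ∈ 𝒦₀ ⊗ 𝒜 admitting a factorization x = α₀ D₁ α₁ ⋯ D_m α_m with α_ℓ ∈ 𝒦₀ ⊗ 1 and each D_ℓ a block diagonal matrix with diagonal blocks from S. Then F is closed under addition, under left and right multiplication by scalar matrices, and under formation of block-diagonal direct sums; if S together with 𝒦₀ ⊗ 1 generates 𝒦₀ ⊗ 𝒜 as an algebra, then F = 𝒦₀ ⊗ 𝒜. -/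
/-!
Fix a size `N` and consider the products `α₀ D₁ α₁ ⋯ D_m α_m` in `M_N(𝒜)` with exactly `m`
block diagonal factors `D_ℓ` of full size `N`. Since `e₁₁ ⊗ 1 ∈ S`, the identity of every size
is block diagonal. Inserting identity factors raises `m`, and adjoining an identity block to each
`D_ℓ` (and a zero block to each `α_ℓ`) turns such a product for `z` into one for the zero-padding
of `z` in `M_{N+1}(𝒜)`. Hence any two elements of `F` have factorizations of a common size and a
common length. Factorizations of a common size multiply, factorizations of a common length add
up blockwise to one of the direct sum, scalar matrices are absorbed into `α₀` and `α_m`, and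
`x + y = [1 1] (x ⊕ y) [1 1]ᵀ`. So `F` is a subalgebra containing `S` and `𝒦₀ ⊗ 1`.
-/

set_option synthInstance.maxHeartbeats 1000000
set_option maxHeartbeats 1000000

/-- The block operator associated to a matrix with entries in `B(H)`. -/
noncomputable def matOp {H : Type*} [NormedAddCommGroup H] [InnerProductSpace ℂ H]
    {n m : ℕ} (M : Matrix (Fin n) (Fin m) (H →L[ℂ] H)) :
    PiLp 2 (fun _ : Fin m => H) →L[ℂ] PiLp 2 (fun _ : Fin n => H) :=
  ∑ i : Fin n, ∑ j : Fin m,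
    (((PiLp.continuousLinearEquiv 2 ℂ (fun _ : Fin n => H)).symm :
        (∀ _ : Fin n, H) →L[ℂ] PiLp 2 (fun _ : Fin n => H)).comp
      (ContinuousLinearMap.pi (Pi.single i (M i j)))).comp
        (PiLp.proj 2 (fun _ : Fin m => H) j)

/-- The norm of a matrix over `B(H)`. -/
noncomputable def matNorm {H : Type*} [NormedAddCommGroup H] [InnerProductSpace ℂ H]
    {n m : ℕ} (M : Matrix (Fin n) (Fin m) (H →L[ℂ] H)) : ℝ :=
  ‖matOp M‖

/-- Zero-padding of an `n × n` matrix to an `N × N` matrix (the usual identification of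
`Mₙ(𝒜)` with a corner of `M_N(𝒜)`, realizing `⋃ₙ Mₙ(𝒜) = 𝒦₀ ⊗ 𝒜`). -/
def padMat {R : Type*} [Zero R] {n N : ℕ} (_ : n ≤ N)
    (M : Matrix (Fin n) (Fin n) R) : Matrix (Fin N) (Fin N) R :=
  Matrix.of fun i j =>
    if h : (i : ℕ) < n ∧ (j : ℕ) < n then M ⟨i, h.1⟩ ⟨j, h.2⟩ else 0

/-- Block diagonal matrices all of whose diagonal blocks belong to the family `S`
(as in equation (2) of the paper). -/
inductive IsBlockDiag {R : Type*} [Ring R]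
    (S : ∀ n : ℕ, Set (Matrix (Fin n) (Fin n) R)) :
    ∀ n : ℕ, Matrix (Fin n) (Fin n) R → Prop
  | base {n : ℕ} {d : Matrix (Fin n) (Fin n) R} (h : d ∈ S n) : IsBlockDiag S n d
  | diag {n m : ℕ} {d : Matrix (Fin n) (Fin n) R} {e : Matrix (Fin m) (Fin m) R} :
      IsBlockDiag S n d → IsBlockDiag S m e →
      IsBlockDiag S (n + m)
        (Matrix.reindex finSumFinEquiv finSumFinEquiv (Matrix.fromBlocks d 0 0 e))

/-- The alternating product `α₀ D₁ α₁ ⋯ D_{m+1} α_{m+1}` of scalar matrices `α_ℓ`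
(elements of `𝒦₀ ⊗ 1`) and matrices `D_ℓ` over `R`. -/
noncomputable def chainProd {R : Type*} [Ring R] [Algebra ℂ R] {N m : ℕ}
    (α : Fin (m + 2) → Matrix (Fin N) (Fin N) ℂ)
    (D : Fin (m + 1) → Matrix (Fin N) (Fin N) R) : Matrix (Fin N) (Fin N) R :=
  (List.ofFn fun ℓ : Fin (m + 1) =>
      (α ℓ.castSucc).map (algebraMap ℂ R) * D ℓ).prod
    * (α (Fin.last (m + 1))).map (algebraMap ℂ R)

/-- `x ∈ ⋃ₙ Mₙ(𝒜)` admits a factorization `x = α₀ D₁ α₁ ⋯ D_m α_m` with the `α_ℓ`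
scalar matrices and each `D_ℓ` (a padding of) a block diagonal matrix with diagonal
blocks from `S`. -/
noncomputable def FactorsThrough {R : Type*} [Ring R] [Algebra ℂ R]
    (S : ∀ n : ℕ, Set (Matrix (Fin n) (Fin n) R))
    (n : ℕ) (x : Matrix (Fin n) (Fin n) R) : Prop :=
  ∃ (N m : ℕ) (hn : n ≤ N)
    (α : Fin (m + 2) → Matrix (Fin N) (Fin N) ℂ)
    (D : Fin (m + 1) → Matrix (Fin N) (Fin N) R),
    (∀ ℓ, ∃ (k : ℕ) (hk : k ≤ N) (d : Matrix (Fin k) (Fin k) R),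
      IsBlockDiag S k d ∧ D ℓ = padMat hk d) ∧
    padMat hn x = chainProd α D

/-- The subalgebra of `𝒦₀ ⊗ 𝒜 = ⋃ₙ Mₙ(𝒜)` generated by the scalar matrices
`𝒦₀ ⊗ 1` together with `S`. -/
inductive Gen {R : Type*} [Ring R] [Algebra ℂ R]
    (S : ∀ n : ℕ, Set (Matrix (Fin n) (Fin n) R)) :
    ∀ n : ℕ, Matrix (Fin n) (Fin n) R → Prop
  | scalar {n : ℕ} (β : Matrix (Fin n) (Fin n) ℂ) : Gen S n (β.map (algebraMap ℂ R))
  | mem {n : ℕ} {d : Matrix (Fin n) (Fin n) R} (h : d ∈ S n) : Gen S n d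
  | add {n : ℕ} {x y : Matrix (Fin n) (Fin n) R} :
      Gen S n x → Gen S n y → Gen S n (x + y)
  | mul {n : ℕ} {x y : Matrix (Fin n) (Fin n) R} :
      Gen S n x → Gen S n y → Gen S n (x * y)
  | pad {n N : ℕ} (h : n ≤ N) {x : Matrix (Fin n) (Fin n) R} :
      Gen S n x → Gen S N (padMat h x)


open Matrix

section Padding

theorem padMat_refl {R : Type*} [Zero R] {n : ℕ} (h : n ≤ n) (M : Matrix (Fin n) (Fin n) R) :
    padMat h M = M := by
  ext i j
  simp [padMat]

theorem padMat_padMat {R : Type*} [Zero R] {n N N' : ℕ} (h : n ≤ N) (h' : N ≤ N')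
    (M : Matrix (Fin n) (Fin n) R) : padMat h' (padMat h M) = padMat (h.trans h') M := by
  ext i j
  by_cases hi : (i : ℕ) < n <;> by_cases hj : (j : ℕ) < n
  · simp [padMat, hi, hj, hi.trans_le h, hj.trans_le h]
  all_goals simp [padMat, hi, hj]

variable (R : Type*) [NonAssocSemiring R]

def inclMat {n N : ℕ} (h : n ≤ N) : Matrix (Fin N) (Fin n) R :=
  (1 : Matrix (Fin N) (Fin N) R).submatrix id (Fin.castLE h)

variable {R}

theorem one_submatrix_id_mul {l m n : Type*} [Fintype m] [DecidableEq m] (f : l → m)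
    (M : Matrix m n R) : (1 : Matrix m m R).submatrix f id * M = M.submatrix f id :=
  one_submatrix_mul f (Equiv.refl m) M

theorem inclMat_mul_apply {n N k : ℕ} (h : n ≤ N) (M : Matrix (Fin n) (Fin k) R) (i : Fin N)
    (j : Fin k) : (inclMat R h * M) i j = if hi : (i : ℕ) < n then M ⟨i, hi⟩ j else 0 := by
  split_ifs with hi
  · obtain ⟨i, rfl⟩ : ∃ i', Fin.castLE h i' = i := ⟨⟨i, hi⟩, rfl⟩
    simp [inclMat, mul_apply, one_apply]
  · refine mul_apply.trans (Finset.sum_eq_zero fun l _ => ?_)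
    have hil : i ≠ Fin.castLE h l := fun e => hi (by simp [e])
    simp [inclMat, one_apply, hil]

theorem mul_inclMat_transpose_apply {n N k : ℕ} (h : n ≤ N) (M : Matrix (Fin k) (Fin n) R)
    (i : Fin k) (j : Fin N) :
    (M * (inclMat R h)ᵀ) i j = if hj : (j : ℕ) < n then M i ⟨j, hj⟩ else 0 := by
  split_ifs with hj
  · obtain ⟨j, rfl⟩ : ∃ j', Fin.castLE h j' = j := ⟨⟨j, hj⟩, rfl⟩
    simp [inclMat, mul_apply, one_apply]
  · refine mul_apply.trans (Finset.sum_eq_zero fun l _ => ?_)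
    have hjl : j ≠ Fin.castLE h l := fun e => hj (by simp [e])
    simp [inclMat, one_apply, hjl]

theorem padMat_eq_inclMat_mul {n N : ℕ} (h : n ≤ N) (M : Matrix (Fin n) (Fin n) R) :
    padMat h M = inclMat R h * M * (inclMat R h)ᵀ := by
  ext i j
  rw [mul_inclMat_transpose_apply]
  by_cases hi : (i : ℕ) < n <;> by_cases hj : (j : ℕ) < n <;>
    simp [padMat, inclMat_mul_apply, hi, hj]

theorem inclMat_transpose_mul_inclMat {n N : ℕ} (h : n ≤ N) :
    (inclMat R h)ᵀ * inclMat R h = 1 := by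
  rw [inclMat, transpose_submatrix, transpose_one, one_submatrix_id_mul, submatrix_submatrix]
  exact submatrix_one _ (Fin.castLE_injective h)

end Padding

section PaddingMul

variable {R : Type*} [Semiring R]

theorem inclMat_transpose_mul_inclMat_mul {α : Type*} {n N : ℕ} (h : n ≤ N)
    (M : Matrix (Fin n) α R) : (inclMat R h)ᵀ * (inclMat R h * M) = M := by
  rw [← Matrix.mul_assoc, inclMat_transpose_mul_inclMat, Matrix.one_mul]

theorem padMat_mul {n N : ℕ} (h : n ≤ N) (A B : Matrix (Fin n) (Fin n) R) :
    padMat h (A * B) = padMat h A * padMat h B := by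
  simp only [padMat_eq_inclMat_mul, Matrix.mul_assoc, inclMat_transpose_mul_inclMat_mul]

theorem padMat_mul_mul {n k N : ℕ} (hn : n ≤ N) (hk : k ≤ N) (a : Matrix (Fin k) (Fin n) R)
    (x : Matrix (Fin n) (Fin n) R) (c : Matrix (Fin n) (Fin k) R) :
    padMat hk (a * x * c) = inclMat R hk * a * (inclMat R hn)ᵀ * padMat hn x *
      (inclMat R hn * c * (inclMat R hk)ᵀ) := by
  simp only [padMat_eq_inclMat_mul, Matrix.mul_assoc, inclMat_transpose_mul_inclMat_mul]

end PaddingMul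

section DirectSum

def dsum {R : Type*} [Zero R] {a b c d : ℕ} (A : Matrix (Fin a) (Fin b) R)
    (B : Matrix (Fin c) (Fin d) R) : Matrix (Fin (a + c)) (Fin (b + d)) R :=
  reindex finSumFinEquiv finSumFinEquiv (fromBlocks A 0 0 B)

theorem dsum_mul {R : Type*} [NonUnitalNonAssocSemiring R] {a b c d e f : ℕ}
    (A : Matrix (Fin a) (Fin b) R) (B : Matrix (Fin c) (Fin d) R)
    (A' : Matrix (Fin b) (Fin e) R) (B' : Matrix (Fin d) (Fin f) R) :
    dsum A B * dsum A' B' = dsum (A * A') (B * B') := by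
  simp [dsum, fromBlocks_multiply]

theorem dsum_one {R : Type*} [Zero R] [One R] {a b : ℕ} :
    dsum (1 : Matrix (Fin a) (Fin a) R) (1 : Matrix (Fin b) (Fin b) R) = 1 := by
  simp [dsum]

theorem map_dsum {R R' : Type*} [Zero R] [Zero R'] {a b c d : ℕ} (A : Matrix (Fin a) (Fin b) R)
    (B : Matrix (Fin c) (Fin d) R) (f : R → R') (hf : f 0 = 0) :
    (dsum A B).map f = dsum (A.map f) (B.map f) := by
  simp [dsum, ← submatrix_map, fromBlocks_map, hf]

theorem padMat_add_eq_dsum {R : Type*} [Zero R] {n : ℕ} (r : ℕ) (M : Matrix (Fin n) (Fin n) R) :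
    padMat (Nat.le_add_right n r) M = dsum M 0 := by
  ext i j
  refine Fin.addCases (fun i => ?_) (fun i => ?_) i <;>
    refine Fin.addCases (fun j => ?_) (fun j => ?_) j <;> simp [padMat, dsum]

theorem dsum_eq_mul_dsum_padMat_mul {R : Type*} [Semiring R] {n m N M : ℕ} (hn : n ≤ N)
    (hm : m ≤ M) (x : Matrix (Fin n) (Fin n) R) (y : Matrix (Fin m) (Fin m) R) :
    dsum x y = dsum (inclMat R hn)ᵀ (inclMat R hm)ᵀ * dsum (padMat hn x) (padMat hm y) *
      dsum (inclMat R hn) (inclMat R hm) := by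
  simp only [dsum_mul, padMat_eq_inclMat_mul, Matrix.mul_assoc, inclMat_transpose_mul_inclMat_mul,
    inclMat_transpose_mul_inclMat, Matrix.mul_one]

def sumRow (R : Type*) [Zero R] [One R] (n : ℕ) : Matrix (Fin n) (Fin (n + n)) R :=
  (fromCols 1 1).submatrix id finSumFinEquiv.symm

theorem add_eq_sumRow_mul_dsum_mul {R : Type*} [Semiring R] {n : ℕ}
    (x y : Matrix (Fin n) (Fin n) R) : x + y = sumRow R n * dsum x y * (sumRow R n)ᵀ := by
  simp only [sumRow, dsum, transpose_submatrix, transpose_fromCols, transpose_one, reindex_apply,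
    submatrix_mul_equiv, submatrix_id_id]
  rw [fromCols_mul_fromBlocks, fromCols_mul_fromRows]
  simp

end DirectSum

section Scalar

variable {R : Type*} [Semiring R] [Algebra ℂ R]

/-- The matrices in `𝒦₀ ⊗ 1`. -/
def IsScalar {m n : Type*} (M : Matrix m n R) : Prop :=
  ∃ β : Matrix m n ℂ, β.map (algebraMap ℂ R) = M

theorem isScalar_map {m n : Type*} (β : Matrix m n ℂ) : IsScalar (β.map (algebraMap ℂ R)) :=
  ⟨β, rfl⟩

theorem isScalar_zero {m n : Type*} : IsScalar (0 : Matrix m n R) :=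
  ⟨0, Matrix.map_zero _ (map_zero _)⟩

theorem isScalar_one {n : Type*} [DecidableEq n] : IsScalar (1 : Matrix n n R) :=
  ⟨1, Matrix.map_one _ (map_zero _) (map_one _)⟩

theorem IsScalar.mul {l m n : Type*} [Fintype m] {M : Matrix l m R} {M' : Matrix m n R}
    (h : IsScalar M) (h' : IsScalar M') : IsScalar (M * M') := by
  obtain ⟨β, rfl⟩ := h
  obtain ⟨β', rfl⟩ := h'
  exact ⟨β * β', Matrix.map_mul⟩

theorem IsScalar.transpose {m n : Type*} {M : Matrix m n R} (h : IsScalar M) : IsScalar Mᵀ := by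
  obtain ⟨β, rfl⟩ := h
  exact ⟨βᵀ, transpose_map⟩

theorem IsScalar.dsum {a b c d : ℕ} {A : Matrix (Fin a) (Fin b) R} {B : Matrix (Fin c) (Fin d) R}
    (hA : IsScalar A) (hB : IsScalar B) : IsScalar (dsum A B) := by
  obtain ⟨β, rfl⟩ := hA
  obtain ⟨γ, rfl⟩ := hB
  exact ⟨_root_.dsum β γ, map_dsum _ _ _ (map_zero _)⟩

theorem isScalar_inclMat {n N : ℕ} (h : n ≤ N) : IsScalar (inclMat R h) :=
  ⟨inclMat ℂ h, by
    rw [inclMat, inclMat, ← submatrix_map, Matrix.map_one _ (map_zero _) (map_one _)]⟩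

theorem isScalar_sumRow (n : ℕ) : IsScalar (sumRow R n) :=
  ⟨sumRow ℂ n, by
    rw [sumRow, sumRow, ← submatrix_map, fromCols_map,
      Matrix.map_one _ (map_zero _) (map_one _)]⟩

end Scalar

section BlockDiag

variable {R : Type*} [Ring R] {S : ∀ n : ℕ, Set (Matrix (Fin n) (Fin n) R)}

theorem IsBlockDiag.dsum {n m : ℕ} {d : Matrix (Fin n) (Fin n) R} {e : Matrix (Fin m) (Fin m) R}
    (hd : IsBlockDiag S n d) (he : IsBlockDiag S m e) : IsBlockDiag S (n + m) (_root_.dsum d e) :=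
  .diag hd he

theorem isBlockDiag_one (hone : (1 : Matrix (Fin 1) (Fin 1) R) ∈ S 1) {N : ℕ} (hN : 1 ≤ N) :
    IsBlockDiag S N 1 := by
  induction N, hN using Nat.le_induction with
  | base => exact .base hone
  | succ N _ ih => simpa only [dsum_one] using ih.dsum (.base hone)

end BlockDiag

section Alternating

variable {R : Type*} [Ring R] [Algebra ℂ R] {S : ∀ n : ℕ, Set (Matrix (Fin n) (Fin n) R)}

/-- `AltProd S N m z`: `z = α₀ D₁ α₁ ⋯ D_m α_m` in `M_N(R)` with scalar `α_ℓ` and block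
diagonal `D_ℓ` of full size `N`; `FactorsThrough` asks for this up to zero-padding, with
`m ≥ 1`. -/
inductive AltProd (S : ∀ n : ℕ, Set (Matrix (Fin n) (Fin n) R)) (N : ℕ) :
    ℕ → Matrix (Fin N) (Fin N) R → Prop
  | scalar {a : Matrix (Fin N) (Fin N) R} : IsScalar a → AltProd S N 0 a
  | cons {a D z : Matrix (Fin N) (Fin N) R} {m : ℕ} :
      IsScalar a → IsBlockDiag S N D → AltProd S N m z → AltProd S N (m + 1) (a * D * z)

theorem IsBlockDiag.altProd {N : ℕ} {d : Matrix (Fin N) (Fin N) R} (hd : IsBlockDiag S N d) :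
    AltProd S N 1 d := by
  simpa using AltProd.cons isScalar_one hd (.scalar isScalar_one)

namespace AltProd

variable {N m k : ℕ} {z w : Matrix (Fin N) (Fin N) R}

theorem scalar_mul {a : Matrix (Fin N) (Fin N) R} (ha : IsScalar a) (hz : AltProd S N m z) :
    AltProd S N m (a * z) := by
  cases hz with
  | scalar hb => exact .scalar (ha.mul hb)
  | cons hb hD hw => simpa only [Matrix.mul_assoc] using cons (ha.mul hb) hD hw

theorem mul (hz : AltProd S N m z) (hw : AltProd S N k w) : AltProd S N (m + k) (z * w) := by
  induction hz with
  | scalar ha => simpa using hw.scalar_mul ha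
  | cons ha hD _ ih =>
    simpa only [Nat.add_right_comm _ 1, Matrix.mul_assoc] using cons ha hD ih

theorem mul_scalar {a : Matrix (Fin N) (Fin N) R} (hz : AltProd S N m z) (ha : IsScalar a) :
    AltProd S N m (z * a) :=
  hz.mul (.scalar ha)

theorem dsum {M : ℕ} {w : Matrix (Fin M) (Fin M) R} (hz : AltProd S N m z)
    (hw : AltProd S M m w) : AltProd S (N + M) m (_root_.dsum z w) := by
  induction hz generalizing w with
  | scalar ha =>
    cases hw with
    | scalar hb => exact .scalar (ha.dsum hb)
  | cons ha hD _ ih =>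
    cases hw with
    | cons hb hE hw => simpa only [dsum_mul] using cons (ha.dsum hb) (hD.dsum hE) (ih hw)

end AltProd

theorem altProd_one (hone : (1 : Matrix (Fin 1) (Fin 1) R) ∈ S 1) {N : ℕ} (hN : 1 ≤ N)
    (m : ℕ) : AltProd S N m 1 := by
  induction m with
  | zero => exact .scalar isScalar_one
  | succ m ih => simpa using AltProd.cons isScalar_one (isBlockDiag_one hone hN) ih

namespace AltProd

variable {N m : ℕ} {z : Matrix (Fin N) (Fin N) R}

theorem mono (hz : AltProd S N m z) (hone : (1 : Matrix (Fin 1) (Fin 1) R) ∈ S 1) (hN : 1 ≤ N)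
    {m' : ℕ} (hm : m ≤ m') : AltProd S N m' z := by
  obtain ⟨k, rfl⟩ := Nat.exists_eq_add_of_le hm
  simpa using hz.mul (altProd_one hone hN k)

theorem padMat (hz : AltProd S N m z) (hone : (1 : Matrix (Fin 1) (Fin 1) R) ∈ S 1) {N' : ℕ}
    (h : N ≤ N') : AltProd S N' m (padMat h z) := by
  induction N', h using Nat.le_induction with
  | base => rwa [padMat_refl]
  | succ N' h ih =>
    have hzero : AltProd S 1 m 0 := by
      simpa using (altProd_one hone le_rfl m).scalar_mul isScalar_zero
    rw [← padMat_padMat h (Nat.le_add_right N' 1), padMat_add_eq_dsum]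
    exact ih.dsum hzero

end AltProd

end Alternating

section ChainProd

variable {R : Type*} [Ring R] [Algebra ℂ R] {S : ∀ n : ℕ, Set (Matrix (Fin n) (Fin n) R)}
  {N : ℕ}

theorem chainProd_fin_two (α : Fin 2 → Matrix (Fin N) (Fin N) ℂ)
    (D : Fin 1 → Matrix (Fin N) (Fin N) R) :
    chainProd α D = (α 0).map (algebraMap ℂ R) * D 0 * (α 1).map (algebraMap ℂ R) := by
  simp [chainProd, List.ofFn_succ, show (Fin.last 1 : Fin 2) = 1 from rfl]

theorem chainProd_cons {m : ℕ} (a : Matrix (Fin N) (Fin N) ℂ)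
    (α : Fin (m + 2) → Matrix (Fin N) (Fin N) ℂ) (D : Matrix (Fin N) (Fin N) R)
    (Ds : Fin (m + 1) → Matrix (Fin N) (Fin N) R) :
    chainProd (Fin.cons a α) (Fin.cons D Ds) = a.map (algebraMap ℂ R) * D * chainProd α Ds := by
  simp [chainProd, List.ofFn_succ, Matrix.mul_assoc]

theorem altProd_list_prod {L : List (Matrix (Fin N) (Fin N) R)}
    (hL : ∀ z ∈ L, AltProd S N 1 z) : AltProd S N L.length L.prod := by
  induction L with
  | nil => exact .scalar isScalar_one
  | cons z L ih =>
    rw [List.prod_cons, List.length_cons, Nat.add_comm]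
    exact (hL z (List.mem_cons_self ..)).mul (ih fun w hw => hL w (List.mem_cons_of_mem _ hw))

theorem altProd_chainProd {m : ℕ} (α : Fin (m + 2) → Matrix (Fin N) (Fin N) ℂ)
    {D : Fin (m + 1) → Matrix (Fin N) (Fin N) R} (hD : ∀ ℓ, AltProd S N 1 (D ℓ)) :
    AltProd S N (m + 1) (chainProd α D) := by
  refine AltProd.mul_scalar ?_ (isScalar_map _)
  simpa using altProd_list_prod (L := List.ofFn fun ℓ : Fin (m + 1) =>
      (α ℓ.castSucc).map (algebraMap ℂ R) * D ℓ)
    (List.forall_mem_ofFn_iff.2 fun ℓ => (hD ℓ).scalar_mul (isScalar_map _))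

theorem AltProd.exists_chainProd {m : ℕ} {z : Matrix (Fin N) (Fin N) R}
    (hz : AltProd S N (m + 1) z) :
    ∃ (α : Fin (m + 2) → Matrix (Fin N) (Fin N) ℂ)
      (D : Fin (m + 1) → Matrix (Fin N) (Fin N) R),
      (∀ ℓ, IsBlockDiag S N (D ℓ)) ∧ z = chainProd α D := by
  induction m generalizing z with
  | zero =>
    obtain _ | ⟨⟨a, rfl⟩, hD, hw⟩ := hz
    obtain ⟨⟨b, rfl⟩⟩ := hw
    exact ⟨![a, b], fun _ => _, fun _ => hD, by simp [chainProd_fin_two]⟩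
  | succ m ih =>
    obtain _ | ⟨⟨a, rfl⟩, hD, hw⟩ := hz
    obtain ⟨α, Ds, hDs, rfl⟩ := ih hw
    exact ⟨Fin.cons a α, Fin.cons _ Ds, Fin.cases hD hDs, (chainProd_cons ..).symm⟩

end ChainProd

section FactorsThrough

variable {R : Type*} [Ring R] [Algebra ℂ R] {S : ∀ n : ℕ, Set (Matrix (Fin n) (Fin n) R)}
  {n : ℕ} {x y : Matrix (Fin n) (Fin n) R} (hone : (1 : Matrix (Fin 1) (Fin 1) R) ∈ S 1)

include hone

theorem FactorsThrough.eventually_altProd (hx : FactorsThrough S n x) :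
    ∃ N₀ m₀ : ℕ, ∀ N m (h : n ≤ N), N₀ ≤ N → m₀ ≤ m →
      AltProd S N m (padMat h x) := by
  obtain ⟨N₀, m₀, h₀, α, D, hD, hx⟩ := hx
  refine ⟨N₀ + 1, m₀ + 1, fun N m h hN hm => ?_⟩
  have hchain : AltProd S N₀ (m₀ + 1) (padMat h₀ x) := by
    refine hx ▸ altProd_chainProd α fun ℓ => ?_
    obtain ⟨k, hk, d, hd, hDℓ⟩ := hD ℓ
    exact hDℓ ▸ hd.altProd.padMat hone hk
  have hpad := hchain.padMat hone (show N₀ ≤ N by omega)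
  rw [padMat_padMat] at hpad
  exact hpad.mono hone (by omega) hm

theorem factorsThrough_of_altProd {N m : ℕ} (h : n ≤ N) (hx : AltProd S N m (padMat h x)) :
    FactorsThrough S n x := by
  have hx' := (hx.padMat hone N.le_succ).mono hone N.succ_pos m.le_succ
  rw [padMat_padMat] at hx'
  obtain ⟨α, D, hD, hαD⟩ := hx'.exists_chainProd
  exact ⟨N + 1, m, _, α, D,
    fun ℓ => ⟨N + 1, le_rfl, D ℓ, hD ℓ, (padMat_refl _ _).symm⟩, hαD⟩

theorem AltProd.factorsThrough {m : ℕ} (hx : AltProd S n m x) : FactorsThrough S n x :=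
  factorsThrough_of_altProd hone le_rfl (by rwa [padMat_refl])

theorem FactorsThrough.isScalar_mul_mul {k : ℕ} {a : Matrix (Fin k) (Fin n) R}
    {c : Matrix (Fin n) (Fin k) R} (hx : FactorsThrough S n x) (ha : IsScalar a)
    (hc : IsScalar c) : FactorsThrough S k (a * x * c) := by
  obtain ⟨N₀, m₀, hx⟩ := hx.eventually_altProd hone
  have hn : n ≤ max N₀ (max n k) := by omega
  have hk : k ≤ max N₀ (max n k) := by omega
  refine factorsThrough_of_altProd (m := m₀) hone hk ?_
  rw [padMat_mul_mul hn hk]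
  exact ((hx _ m₀ hn (by omega) le_rfl).scalar_mul
    (((isScalar_inclMat hk).mul ha).mul (isScalar_inclMat hn).transpose)).mul_scalar
    (((isScalar_inclMat hn).mul hc).mul (isScalar_inclMat hk).transpose)

theorem FactorsThrough.dsum {m : ℕ} {y : Matrix (Fin m) (Fin m) R} (hx : FactorsThrough S n x)
    (hy : FactorsThrough S m y) : FactorsThrough S (n + m) (dsum x y) := by
  obtain ⟨N₁, m₁, hx⟩ := hx.eventually_altProd hone
  obtain ⟨N₂, m₂, hy⟩ := hy.eventually_altProd hone
  have hn : n ≤ max N₁ n := le_max_right ..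
  have hm : m ≤ max N₂ m := le_max_right ..
  have hxy := ((hx _ (max m₁ m₂) hn (le_max_left ..) (le_max_left ..)).dsum
    (hy _ (max m₁ m₂) hm (le_max_left ..) (le_max_right ..))).factorsThrough hone
  rw [dsum_eq_mul_dsum_padMat_mul hn hm]
  exact hxy.isScalar_mul_mul hone
    ((isScalar_inclMat hn).transpose.dsum (isScalar_inclMat hm).transpose)
    ((isScalar_inclMat hn).dsum (isScalar_inclMat hm))

theorem FactorsThrough.add (hx : FactorsThrough S n x) (hy : FactorsThrough S n y) :
    FactorsThrough S n (x + y) := by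
  rw [add_eq_sumRow_mul_dsum_mul]
  exact (hx.dsum hone hy).isScalar_mul_mul hone (isScalar_sumRow n) (isScalar_sumRow n).transpose

theorem FactorsThrough.mul (hx : FactorsThrough S n x) (hy : FactorsThrough S n y) :
    FactorsThrough S n (x * y) := by
  obtain ⟨N₁, m₁, hx⟩ := hx.eventually_altProd hone
  obtain ⟨N₂, m₂, hy⟩ := hy.eventually_altProd hone
  have h : n ≤ max n (max N₁ N₂) := le_max_left ..
  refine factorsThrough_of_altProd (m := m₁ + m₂) hone h ?_
  rw [padMat_mul]
  exact (hx _ m₁ h (by omega) le_rfl).mul (hy _ m₂ h (by omega) le_rfl)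

theorem FactorsThrough.padMat {N : ℕ} (h : n ≤ N) (hx : FactorsThrough S n x) :
    FactorsThrough S N (padMat h x) := by
  rw [padMat_eq_inclMat_mul]
  exact hx.isScalar_mul_mul hone (isScalar_inclMat h) (isScalar_inclMat h).transpose

theorem Gen.factorsThrough (hx : Gen S n x) : FactorsThrough S n x := by
  induction hx with
  | scalar β => exact (AltProd.scalar (isScalar_map β)).factorsThrough hone
  | mem hd => exact (IsBlockDiag.base hd).altProd.factorsThrough hone
  | add _ _ ihx ihy => exact ihx.add hone ihy
  | mul _ _ ihx ihy => exact ihx.mul hone ihy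
  | pad h _ ih => exact ih.padMat hone h

end FactorsThrough

theorem factorizable_set_is_everything_general
    {ℋ : Type*} [NormedAddCommGroup ℋ] [InnerProductSpace ℂ ℋ]
    (A : Subalgebra ℂ (ℋ →L[ℂ] ℋ))
    (S : ∀ n : ℕ, Set (Matrix (Fin n) (Fin n) ↥A))
    (hone : (1 : Matrix (Fin 1) (Fin 1) ↥A) ∈ S 1) :
    (∀ (n : ℕ) (x y : Matrix (Fin n) (Fin n) ↥A),
      FactorsThrough S n x → FactorsThrough S n y → FactorsThrough S n (x + y)) ∧
    (∀ (n k : ℕ) (x : Matrix (Fin n) (Fin n) ↥A), FactorsThrough S n x →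
      ∀ (β : Matrix (Fin k) (Fin n) ℂ) (γ : Matrix (Fin n) (Fin k) ℂ),
        FactorsThrough S k
          (β.map (algebraMap ℂ ↥A) * x * γ.map (algebraMap ℂ ↥A))) ∧
    (∀ (n m : ℕ) (x : Matrix (Fin n) (Fin n) ↥A) (y : Matrix (Fin m) (Fin m) ↥A),
      FactorsThrough S n x → FactorsThrough S m y →
      FactorsThrough S (n + m)
        (Matrix.reindex finSumFinEquiv finSumFinEquiv (Matrix.fromBlocks x 0 0 y))) ∧
    ((∀ (n : ℕ) (x : Matrix (Fin n) (Fin n) ↥A), Gen S n x) →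
      ∀ (n : ℕ) (x : Matrix (Fin n) (Fin n) ↥A), FactorsThrough S n x) :=
  ⟨fun _ _ _ hx hy => hx.add hone hy,
    fun _ _ _ hx β γ => hx.isScalar_mul_mul hone (isScalar_map β) (isScalar_map γ),
    fun _ _ _ _ hx hy => hx.dsum hone hy,
    fun hGen n x => (hGen n x).factorsThrough hone⟩

/-- Let `𝒜 ⊆ B(ℋ)` be a unital operator algebra and `S` a set of contractions in
`⋃ₙ Mₙ(𝒜)` containing `e₁₁ ⊗ 1`. The set `F` of elements of `𝒦₀ ⊗ 𝒜` admitting a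
factorization `α₀ D₁ α₁ ⋯ D_m α_m` (scalar `α_ℓ`, block diagonal `D_ℓ` with blocks in
`S`) is closed under addition, under left and right multiplication by scalar matrices,
and under block-diagonal direct sums; and if `S` together with `𝒦₀ ⊗ 1` generates
`𝒦₀ ⊗ 𝒜` as an algebra, then `F` is everything. -/
theorem factorizable_set_is_everything
    {ℋ : Type*} [NormedAddCommGroup ℋ] [InnerProductSpace ℂ ℋ] [CompleteSpace ℋ]
    (A : Subalgebra ℂ (ℋ →L[ℂ] ℋ))
    (S : ∀ n : ℕ, Set (Matrix (Fin n) (Fin n) ↥A))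
    (hS : ∀ (n : ℕ) (d : Matrix (Fin n) (Fin n) ↥A), d ∈ S n →
      matNorm (d.map fun a => (a : ℋ →L[ℂ] ℋ)) ≤ 1)
    (hone : (1 : Matrix (Fin 1) (Fin 1) ↥A) ∈ S 1) :
    (∀ (n : ℕ) (x y : Matrix (Fin n) (Fin n) ↥A),
      FactorsThrough S n x → FactorsThrough S n y → FactorsThrough S n (x + y)) ∧
    (∀ (n k : ℕ) (x : Matrix (Fin n) (Fin n) ↥A), FactorsThrough S n x →
      ∀ (β : Matrix (Fin k) (Fin n) ℂ) (γ : Matrix (Fin n) (Fin k) ℂ),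
        FactorsThrough S k
          (β.map (algebraMap ℂ ↥A) * x * γ.map (algebraMap ℂ ↥A))) ∧
    (∀ (n m : ℕ) (x : Matrix (Fin n) (Fin n) ↥A) (y : Matrix (Fin m) (Fin m) ↥A),
      FactorsThrough S n x → FactorsThrough S m y →
      FactorsThrough S (n + m)
        (Matrix.reindex finSumFinEquiv finSumFinEquiv (Matrix.fromBlocks x 0 0 y))) ∧
    ((∀ (n : ℕ) (x : Matrix (Fin n) (Fin n) ↥A), Gen S n x) →
      ∀ (n : ℕ) (x : Matrix (Fin n) (Fin n) ↥A), FactorsThrough S n x) :=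
  factorizable_set_is_everything_general A S hone
end
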